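/- Let G be a finite compass φ-structure of size N for an ABB̄L̄-formula φ, and for each row y let c_y be its characteristic function. If two rows 0 < y0 < y1 < N satisfy c_{y0} = c_{y1} and L(y0−1,y0) = L(y1−1,y1), then y0 and y1 are compatible. -/
import Mathlib


namespace ABBL

/-- Formulas of the interval temporal logic ABB̄L̄, built from propositional
variables (of type `P`) using negation, disjunction and the unary modal
operators ⟨A⟩, ⟨B⟩, ⟨B̄⟩, ⟨L̄⟩. -/
inductive Formula (P : Type) : Type
  | atom  : P → Formula P
  | neg   : Formula P → Formula P
  | or    : Formula P → Formula P → Formula P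
  | diaA  : Formula P → Formula P
  | diaB  : Formula P → Formula P
  | diaBb : Formula P → Formula P
  | diaLb : Formula P → Formula P

variable {P : Type}

/-- The set of subformulas of a formula. -/
def subf : Formula P → Set (Formula P)
  | .atom a   => {Formula.atom a}
  | .neg ψ    => insert (Formula.neg ψ) (subf ψ)
  | .or ψ χ   => insert (Formula.or ψ χ) (subf ψ ∪ subf χ)
  | .diaA ψ   => insert (Formula.diaA ψ) (subf ψ)
  | .diaB ψ   => insert (Formula.diaB ψ) (subf ψ)
  | .diaBb ψ  => insert (Formula.diaBb ψ) (subf ψ)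
  | .diaLb ψ  => insert (Formula.diaLb ψ) (subf ψ)

/-- The number `|φ|` of subformulas of `φ`. -/
noncomputable def numSub (φ : Formula P) : ℕ := (subf φ).ncard

/-- Negation, identifying `¬¬α` with `α`. -/
def negc : Formula P → Formula P
  | .neg ψ => ψ
  | ψ      => Formula.neg ψ

/-- The closure `Cl(φ)`: all subformulas of `φ` and their negations. -/
def Cl (φ : Formula P) : Set (Formula P) := subf φ ∪ negc '' subf φ

/-- The extended closure `Cl⁺(φ)`: `Cl(φ)` together with all formulas
`⟨R⟩α` and `¬⟨R⟩α` for `R ∈ {A,B,B̄,L̄}` and `α ∈ Cl(φ)`. -/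
def Clp (φ : Formula P) : Set (Formula P) :=
  Cl φ ∪ {ψ | ∃ α ∈ Cl φ,
    ψ = Formula.diaA α ∨ ψ = Formula.neg (Formula.diaA α) ∨
    ψ = Formula.diaB α ∨ ψ = Formula.neg (Formula.diaB α) ∨
    ψ = Formula.diaBb α ∨ ψ = Formula.neg (Formula.diaBb α) ∨
    ψ = Formula.diaLb α ∨ ψ = Formula.neg (Formula.diaLb α)}

/-- A `φ`-atom: a nonempty, maximal locally consistent subset of `Cl⁺(φ)`. -/
structure IsAtom (φ : Formula P) (F : Set (Formula P)) : Prop where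
  nonempty : F.Nonempty
  subset   : F ⊆ Clp φ
  negCond  : ∀ α ∈ Clp φ, (α ∈ F ↔ negc α ∉ F)
  orCond   : ∀ α β, Formula.or α β ∈ Clp φ → (Formula.or α β ∈ F ↔ α ∈ F ∨ β ∈ F)

/-- The observables of `F`: `Obs(F) = F ∩ Cl(φ)`. -/
def Obs (φ : Formula P) (F : Set (Formula P)) : Set (Formula P) := F ∩ Cl φ

/-- The `A`-requests of `F`. -/
def ReqA (φ : Formula P) (F : Set (Formula P)) : Set (Formula P) :=
  {α | α ∈ Cl φ ∧ Formula.diaA α ∈ F}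

/-- The `B`-requests of `F`. -/
def ReqB (φ : Formula P) (F : Set (Formula P)) : Set (Formula P) :=
  {α | α ∈ Cl φ ∧ Formula.diaB α ∈ F}

/-- The `B̄`-requests of `F`. -/
def ReqBb (φ : Formula P) (F : Set (Formula P)) : Set (Formula P) :=
  {α | α ∈ Cl φ ∧ Formula.diaBb α ∈ F}

/-- The `L̄`-requests of `F`. -/
def ReqLb (φ : Formula P) (F : Set (Formula P)) : Set (Formula P) :=
  {α | α ∈ Cl φ ∧ Formula.diaLb α ∈ F}

/-- The dependency relation `F →_A G`. -/
def DepA (φ : Formula P) (F G : Set (Formula P)) : Prop :=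
  ReqA φ F = Obs φ G ∪ ReqB φ G ∪ ReqBb φ G

/-- The dependency relation `F →_B G`. -/
def DepB (φ : Formula P) (F G : Set (Formula P)) : Prop :=
  (Obs φ F ∪ ReqBb φ F ⊆ ReqBb φ G) ∧
  (ReqBb φ G ⊆ Obs φ F ∪ ReqBb φ F ∪ ReqB φ F) ∧
  (Obs φ G ∪ ReqB φ G ⊆ ReqB φ F) ∧
  (ReqB φ F ⊆ Obs φ G ∪ ReqB φ G ∪ ReqBb φ G) ∧
  ReqLb φ F = ReqLb φ G

/-- The dependency relation `F →_L̄ G`. -/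
def DepLb (φ : Formula P) (F G : Set (Formula P)) : Prop :=
  Obs φ G ∪ ReqLb φ G ⊆ ReqLb φ F

/-! ### Interval structures and semantics -/

/-- Intervals `[x,y]` with `x < y` over a linear order `O`. -/
def Interval (O : Type) [LinearOrder O] : Type := {p : O × O // p.1 < p.2}

variable {O : Type} [LinearOrder O]

/-- Allen's "meets" relation: `[x,y] A [x',y']` iff `y = x'`. -/
def relA (I J : Interval O) : Prop := I.1.2 = J.1.1

/-- Allen's "begins" relation: `[x,y] B [x',y']` iff `x = x'` and `y' < y`. -/
def relB (I J : Interval O) : Prop := I.1.1 = J.1.1 ∧ J.1.2 < I.1.2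

/-- Allen's "begun by" relation: `[x,y] B̄ [x',y']` iff `x = x'` and `y < y'`. -/
def relBb (I J : Interval O) : Prop := I.1.1 = J.1.1 ∧ I.1.2 < J.1.2

/-- Allen's "before" relation: `[x,y] L̄ [x',y']` iff `y' < x`. -/
def relLb (I J : Interval O) : Prop := J.1.2 < I.1.1

/-- Satisfaction of a formula at an interval of an interval structure
`S = (I_O, σ)`, where `σ` is the labeling with sets of propositional variables. -/
def sat (σ : Interval O → Set P) : Formula P → Interval O → Prop
  | .atom a, I  => a ∈ σ I
  | .neg ψ, I   => ¬ sat σ ψ I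
  | .or ψ χ, I  => sat σ ψ I ∨ sat σ χ I
  | .diaA ψ, I  => ∃ J, relA I J ∧ sat σ ψ J
  | .diaB ψ, I  => ∃ J, relB I J ∧ sat σ ψ J
  | .diaBb ψ, I => ∃ J, relBb I J ∧ sat σ ψ J
  | .diaLb ψ, I => ∃ J, relLb I J ∧ sat σ ψ J

/-- A linear order is strongly discrete iff there are only finitely many
points between any two points. -/
def StronglyDiscrete (O : Type) [LinearOrder O] : Prop :=
  ∀ x y : O, (Set.Ioo x y).Finite

/-- The `φ`-type of an interval: the set of formulas of `Cl⁺(φ)` true at it. -/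
def TypeS (σ : Interval O → Set P) (φ : Formula P) (I : Interval O) : Set (Formula P) :=
  {α | α ∈ Clp φ ∧ sat σ α I}

/-! ### Compass structures over a linear order -/

/-- A (consistent and fulfilling) compass `φ`-structure over a linear order `O`:
a labeling of the points `(x,y)` with `x < y` (identified with intervals) by
`φ`-atoms, satisfying consistency and fulfillment. -/
structure IsCompass (φ : Formula P) (L : Interval O → Set (Formula P)) : Prop where
  isAtom : ∀ p, IsAtom φ (L p)
  consA  : ∀ p q, relA p q → DepA φ (L p) (L q)
  consB  : ∀ p q, relB p q → DepB φ (L p) (L q)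
  consLb : ∀ p q, relLb p q → DepLb φ (L p) (L q)
  fulA   : ∀ p, ∀ α ∈ ReqA φ (L p), ∃ q, relA p q ∧ α ∈ Obs φ (L q)
  fulB   : ∀ p, ∀ α ∈ ReqB φ (L p), ∃ q, relB p q ∧ α ∈ Obs φ (L q)
  fulBb  : ∀ p, ∀ α ∈ ReqBb φ (L p), ∃ q, relBb p q ∧ α ∈ Obs φ (L q)
  fulLb  : ∀ p, ∀ α ∈ ReqLb φ (L p), ∃ q, relLb p q ∧ α ∈ Obs φ (L q)

/-! ### Finite compass structures, over `O = {0,…,N−1}` -/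

/-- A finite compass structure of size `N` (consistency conditions only):
the points are the pairs `(x,y)` with `x < y < N`, and `L` gives the labeling
by `φ`-atoms. Consistency is required for the relations `A`, `B`, `L̄`. -/
structure IsPreCompass (φ : Formula P) (N : ℕ) (L : ℕ → ℕ → Set (Formula P)) : Prop where
  isAtom : ∀ x y, x < y → y < N → IsAtom φ (L x y)
  consA  : ∀ x y z, x < y → y < z → z < N → DepA φ (L x y) (L y z)
  consB  : ∀ x z y, x < z → z < y → y < N → DepB φ (L x y) (L x z)
  consLb : ∀ u v x y, u < v → v < x → x < y → y < N → DepLb φ (L x y) (L u v)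

/-- A (consistent and fulfilling) finite compass `φ`-structure of size `N`. -/
structure IsFinCompass (φ : Formula P) (N : ℕ) (L : ℕ → ℕ → Set (Formula P))
    extends IsPreCompass φ N L : Prop where
  fulA  : ∀ x y, x < y → y < N → ∀ α ∈ ReqA φ (L x y),
            ∃ z, y < z ∧ z < N ∧ α ∈ Obs φ (L y z)
  fulB  : ∀ x y, x < y → y < N → ∀ α ∈ ReqB φ (L x y),
            ∃ z, x < z ∧ z < y ∧ α ∈ Obs φ (L x z)
  fulBb : ∀ x y, x < y → y < N → ∀ α ∈ ReqBb φ (L x y),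
            ∃ z, y < z ∧ z < N ∧ α ∈ Obs φ (L x z)
  fulLb : ∀ x y, x < y → y < N → ∀ α ∈ ReqLb φ (L x y),
            ∃ u v, u < v ∧ v < x ∧ α ∈ Obs φ (L u v)

/-- The shading of row `y`: the set of atoms occurring on row `y`. -/
def Shading (L : ℕ → ℕ → Set (Formula P)) (y : ℕ) : Set (Set (Formula P)) :=
  {F | ∃ x, x < y ∧ L x y = F}

/-- The property (WIT) of a set of points `W` being a witness set for row `y`:
every `ψ ∈ Cl(φ)` appearing in the label of a point above row `y` has a witness
in `W` at minimal height above `y`. -/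
def WitProp (φ : Formula P) (N : ℕ) (L : ℕ → ℕ → Set (Formula P)) (y : ℕ)
    (W : Set (ℕ × ℕ)) : Prop :=
  (∀ p ∈ W, p.1 < p.2 ∧ p.2 < N ∧ y < p.2) ∧
  ∀ ψ ∈ Cl φ, (∃ x' y', x' < y' ∧ y' < N ∧ y < y' ∧ ψ ∈ L x' y') →
    ∃ p ∈ W, ψ ∈ L p.1 p.2 ∧
      ∀ x' y', x' < y' → y' < N → y < y' → y' < p.2 → negc ψ ∈ L x' y'

/-- A witness set for row `y`: a minimal set satisfying (WIT). -/
def IsWitSet (φ : Formula P) (N : ℕ) (L : ℕ → ℕ → Set (Formula P)) (y : ℕ)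
    (W : Set (ℕ × ℕ)) : Prop :=
  WitProp φ N L y W ∧ ∀ W' ⊆ W, WitProp φ N L y W' → W' = W

/-- `π_ȳ(S)`: the `x`-coordinates, smaller than `ȳ`, of the points in `S`. -/
def proj (ybar : ℕ) (S : Set (ℕ × ℕ)) : Set ℕ := {x | (∃ y, (x, y) ∈ S) ∧ x < ybar}

/-- Two rows `y0 < y1` of a finite compass structure are compatible. -/
def Compatible (φ : Formula P) (N : ℕ) (L : ℕ → ℕ → Set (Formula P))
    (y0 y1 : ℕ) : Prop :=
  Shading L y0 = Shading L y1 ∧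
  L (y0 - 1) y0 = L (y1 - 1) y1 ∧
  ∃ W, IsWitSet φ N L y1 W ∧
    ∃ w : ℕ → ℕ, Set.InjOn w (proj y1 W) ∧
      ∀ x ∈ proj y1 W, w x < y0 ∧ L x y1 = L (w x) y0

/-- `#(F,y)`: the number of points on row `y` labeled by `F`. -/
noncomputable def cnt (L : ℕ → ℕ → Set (Formula P)) (y : ℕ) (F : Set (Formula P)) : ℕ :=
  Set.ncard {x | x < y ∧ L x y = F}

/-- The characteristic function of row `y`: counts occurrences of each atom,
capped at `2|φ|`. -/
noncomputable def charFn (φ : Formula P) (L : ℕ → ℕ → Set (Formula P)) (y : ℕ)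
    (F : Set (Formula P)) : ℕ :=
  min (cnt L y F) (2 * numSub φ)

/-- The formula `ξ = φ ∨ ⟨B̄⟩φ ∨ ⟨A⟩φ ∨ ⟨A⟩⟨A⟩φ`. -/
def xi (φ : Formula P) : Formula P :=
  Formula.or (Formula.or (Formula.or φ (Formula.diaBb φ)) (Formula.diaA φ))
    (Formula.diaA (Formula.diaA φ))

/-! ### Partially fulfilling structures and compass generators -/

/-- A finite compass structure of size `N` is partially fulfilling: every
request of a point strictly below the top row `N-1` is either fulfilled or
transferred to the border. -/
def PartFulfilling (φ : Formula P) (N : ℕ) (L : ℕ → ℕ → Set (Formula P)) : Prop :=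
  ∀ x y, x < y → y < N - 1 →
    (∀ ψ ∈ ReqA φ (L x y),
        (∃ z, y < z ∧ z < N ∧ ψ ∈ Obs φ (L y z)) ∨ ψ ∈ ReqBb φ (L y (N - 1))) ∧
    (∀ ψ ∈ ReqB φ (L x y), ∃ z, x < z ∧ z < y ∧ ψ ∈ Obs φ (L x z)) ∧
    (∀ ψ ∈ ReqBb φ (L x y),
        (∃ z, y < z ∧ z < N ∧ ψ ∈ Obs φ (L x z)) ∨ ψ ∈ ReqBb φ (L x (N - 1))) ∧
    (∀ ψ ∈ ReqLb φ (L x y),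
        (∃ u v, u < v ∧ v < x ∧ ψ ∈ Obs φ (L u v)) ∨ ψ ∈ ReqLb φ (L 0 1))

/-- The defining property of a future witness set for row `y`. -/
def FutWitProp (φ : Formula P) (N : ℕ) (L : ℕ → ℕ → Set (Formula P)) (y : ℕ)
    (FW : Set ℕ) : Prop :=
  (∀ x ∈ FW, x < y) ∧
  ∀ F ∈ Shading L y, ∃ x ∈ FW, L x y = F ∧
    ∀ ψ ∈ ReqBb φ F, ∃ y', y < y' ∧ y' < N ∧ ψ ∈ Obs φ (L x y')

/-- A future witness set for row `y`: a minimal set satisfying `FutWitProp`. -/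
def IsFutWit (φ : Formula P) (N : ℕ) (L : ℕ → ℕ → Set (Formula P)) (y : ℕ)
    (FW : Set ℕ) : Prop :=
  FutWitProp φ N L y FW ∧ ∀ FW' ⊆ FW, FutWitProp φ N L y FW' → FW' = FW

/-- The defining property of a past witness set for row `y`. -/
def PastWitProp (φ : Formula P) (N : ℕ) (L : ℕ → ℕ → Set (Formula P)) (y : ℕ)
    (PW : Set (ℕ × ℕ)) : Prop :=
  (∀ p ∈ PW, p.1 < p.2 ∧ p.2 < N) ∧
  ∀ ψ ∈ ReqLb φ (L (y - 1) y), ∃ p ∈ PW, ψ ∈ Obs φ (L p.1 p.2) ∧ p.2 < y - 1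

/-- A past witness set for row `y`: a minimal set satisfying `PastWitProp`. -/
def IsPastWit (φ : Formula P) (N : ℕ) (L : ℕ → ℕ → Set (Formula P)) (y : ℕ)
    (PW : Set (ℕ × ℕ)) : Prop :=
  PastWitProp φ N L y PW ∧ ∀ PW' ⊆ PW, PastWitProp φ N L y PW' → PW' = PW

/-- Conditions (G1)–(G6) on the four distinguished rows of a compass generator. -/
structure GenRows (φ : Formula P) (N : ℕ) (L : ℕ → ℕ → Set (Formula P))
    (yφ y0 y1 y2 : ℕ) : Prop where
  rowφpos : 0 < yφ
  rowφlt  : yφ < N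
  row0pos : 0 < y0
  row2lt  : y2 < N
  g1a : y0 < y1
  g1b : y1 < y2
  g1c : y0 ≤ yφ
  g2  : φ ∈ L (yφ - 1) yφ ∨ Formula.diaBb φ ∈ L (yφ - 1) yφ
  g3a : Shading L y1 ⊆ Shading L y0
  g3b : L (y0 - 1) y0 = L (y1 - 1) y1
  g4  : ∃ PW, IsPastWit φ N L y1 PW ∧ ∀ x ∈ proj y1 PW, y0 ≤ x
  g5a : Shading L (N - 1) ⊆ Shading L y2
  g5b : L (y2 - 1) y2 = L (N - 2) (N - 1)
  g6  : ∃ FW, IsFutWit φ N L y2 FW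

/-- A compass generator for `φ`: a finite, partially fulfilling compass
structure admitting four rows satisfying (G1)–(G6). -/
structure IsCompassGen (φ : Formula P) (N : ℕ) (L : ℕ → ℕ → Set (Formula P)) : Prop where
  pre     : IsPreCompass φ N L
  partFul : PartFulfilling φ N L
  rows    : ∃ yφ y0 y1 y2, GenRows φ N L yφ y0 y1 y2

/-- Global compatibility of two rows `y < y'` of a compass generator with
distinguished rows `yφ, y0, y1, y2`. -/
def GlobCompatible (φ : Formula P) (N : ℕ) (L : ℕ → ℕ → Set (Formula P))
    (yφ y0 y1 y2 y y' : ℕ) : Prop :=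
  L (y - 1) y = L (y' - 1) y' ∧ Shading L y = Shading L y' ∧
  (∀ ybar ∈ ({yφ, y0, y1, y2} : Set ℕ), ¬ (y ≤ ybar ∧ ybar ≤ y')) ∧
  ∃ PW FW,
    IsPastWit φ N L y1 PW ∧
    (∀ p ∈ PW, ¬ (y ≤ p.2 ∧ p.2 ≤ y')) ∧
    IsFutWit φ N L y2 FW ∧
    (∀ xbar ∈ FW, ∀ ψ ∈ ReqBb φ (L xbar y2),
      ∃ ybar, y2 < ybar ∧ ybar < N ∧ ψ ∈ Obs φ (L xbar ybar) ∧ ¬ (y ≤ ybar ∧ ybar ≤ y')) ∧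
    ∃ W, IsWitSet φ N L y' W ∧
      ∃ w : ℕ → ℕ,
        Set.InjOn w (proj y' (W ∪ PW ∪ (fun x => (x, y2)) '' FW)) ∧
        (∀ x ∈ proj y' (W ∪ PW ∪ (fun x => (x, y2)) '' FW),
          w x < y ∧ L x y' = L (w x) y) ∧
        (∀ x ∈ proj y' PW, w x = x)


/-! ### Auxiliary lemmas -/

lemma subf_finite (φ : Formula P) : (subf φ).Finite := by
  induction φ with
  | atom a => exact Set.finite_singleton _
  | neg ψ ih => exact ih.insert _
  | or ψ χ ih1 ih2 => exact (ih1.union ih2).insert _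
  | diaA ψ ih => exact ih.insert _
  | diaB ψ ih => exact ih.insert _
  | diaBb ψ ih => exact ih.insert _
  | diaLb ψ ih => exact ih.insert _

lemma mem_subf_self (φ : Formula P) : φ ∈ subf φ := by
  cases φ <;> simp [subf]

lemma numSub_pos (φ : Formula P) : 0 < numSub φ :=
  (Set.ncard_pos (subf_finite φ)).mpr ⟨φ, mem_subf_self φ⟩

lemma Cl_finite (φ : Formula P) : (Cl φ).Finite :=
  (subf_finite φ).union ((subf_finite φ).image negc)

lemma Cl_ncard_le (φ : Formula P) : (Cl φ).ncard ≤ 2 * numSub φ := by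
  have h1 := Set.ncard_union_le (subf φ) (negc '' subf φ)
  have h2 := Set.ncard_image_le (f := negc) (subf_finite φ)
  have : (Cl φ).ncard ≤ (subf φ).ncard + (negc '' subf φ).ncard := h1
  simp only [numSub]
  omega

lemma exists_min_subset {X : Type*} (Q : Set X → Prop) :
    ∀ (n : ℕ) (S : Set X), S.Finite → S.ncard ≤ n → Q S →
      ∃ T, T ⊆ S ∧ Q T ∧ ∀ T' ⊆ T, Q T' → T' = T := by
  intro n
  induction n with
  | zero =>
    intro S hfin hcard hQ
    have hS : S = ∅ := by
      rw [← Set.ncard_eq_zero hfin]; omega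
    exact ⟨S, subset_rfl, hQ, fun T' hT' _ => by
      subst hS; exact Set.subset_empty_iff.mp hT'⟩
  | succ n ih =>
    intro S hfin hcard hQ
    by_cases h : ∀ T' ⊆ S, Q T' → T' = S
    · exact ⟨S, subset_rfl, hQ, h⟩
    · push_neg at h
      obtain ⟨T', hsub, hQ', hne⟩ := h
      have hss : T' ⊂ S := hsub.ssubset_of_ne hne
      have hlt : T'.ncard < S.ncard := Set.ncard_lt_ncard hss hfin
      obtain ⟨T, hT1, hT2, hT3⟩ := ih T' (hfin.subset hsub) (by omega) hQ'
      exact ⟨T, hT1.trans hsub, hT2, hT3⟩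

/-- Two rows of a finite compass `φ`-structure having the same
characteristic function and the same label on their last (unit) interval are
compatible. -/
theorem compatible_of_charFn_eq {P : Type} (φ : Formula P) (N : ℕ)
    (L : ℕ → ℕ → Set (Formula P)) (hG : IsFinCompass φ N L)
    (y0 y1 : ℕ) (hy0 : 0 < y0) (hy01 : y0 < y1) (hy1 : y1 < N)
    (hchar : ∀ F : Set (Formula P), charFn φ L y0 F = charFn φ L y1 F)
    (hcorner : L (y0 - 1) y0 = L (y1 - 1) y1) :
    Compatible φ N L y0 y1 := by
  classical
  have hns : 0 < 2 * numSub φ := by have := numSub_pos φ; omega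
  have hfin : ∀ (y : ℕ) (F : Set (Formula P)), {x | x < y ∧ L x y = F}.Finite :=
    fun y F => (Set.finite_Iio y).subset fun x hx => hx.1
  -- Part 1: shading equality
  have hshadeq : Shading L y0 = Shading L y1 := by
    ext F
    have h0 : ∀ y, F ∈ Shading L y ↔ {x | x < y ∧ L x y = F}.Nonempty := by
      intro y
      constructor
      · rintro ⟨x, hx, hL⟩; exact ⟨x, hx, hL⟩
      · rintro ⟨x, hx, hL⟩; exact ⟨x, hx, hL⟩
    rw [h0, h0, ← Set.ncard_pos (hfin y0 F), ← Set.ncard_pos (hfin y1 F)]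
    have hc := hchar F
    simp only [charFn, cnt] at hc
    omega
  -- Part 3: the witness set and the injection
  -- existence of "good" witness points with minimal height
  have hgood : ∀ ψ, ψ ∈ Cl φ → (∃ x' y', x' < y' ∧ y' < N ∧ y1 < y' ∧ ψ ∈ L x' y') →
      ∃ p : ℕ × ℕ, p.1 < p.2 ∧ p.2 < N ∧ y1 < p.2 ∧ ψ ∈ L p.1 p.2 ∧
        ∀ x' y', x' < y' → y' < N → y1 < y' → y' < p.2 → negc ψ ∈ L x' y' := by
    intro ψ hψ happ
    set R : Set ℕ := {yy | ∃ x', x' < yy ∧ yy < N ∧ y1 < yy ∧ ψ ∈ L x' yy} with hR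
    have hRne : R.Nonempty := by
      obtain ⟨x', y', h1, h2, h3, h4⟩ := happ
      exact ⟨y', x', h1, h2, h3, h4⟩
    obtain ⟨x, hx1, hx2, hx3, hx4⟩ := Nat.sInf_mem hRne
    refine ⟨(x, sInf R), hx1, hx2, hx3, hx4, ?_⟩
    intro x' y' h1 h2 h3 h4
    have hnot : ψ ∉ L x' y' := by
      intro hmem'
      have : sInf R ≤ y' := Nat.sInf_le ⟨x', h1, h2, h3, hmem'⟩
      omega
    have hA := hG.isAtom x' y' h1 h2
    have hiff := hA.negCond ψ ((Set.mem_union _ _ _).mpr (Or.inl hψ))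
    by_contra hc
    exact hnot (hiff.mpr hc)
  -- choose the witness points
  set good : Formula P → ℕ × ℕ → Prop := fun ψ p =>
    p.1 < p.2 ∧ p.2 < N ∧ y1 < p.2 ∧ ψ ∈ L p.1 p.2 ∧
      ∀ x' y', x' < y' → y' < N → y1 < y' → y' < p.2 → negc ψ ∈ L x' y' with hgood_def
  set pt : Formula P → ℕ × ℕ := fun ψ => if h : ∃ p, good ψ p then h.choose else (0, 1)
    with hpt_def
  have hpt : ∀ ψ, (∃ p, good ψ p) → good ψ (pt ψ) := by
    intro ψ h
    simp only [hpt_def, dif_pos h]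
    exact h.choose_spec
  set relevant : Set (Formula P) :=
    {ψ | ψ ∈ Cl φ ∧ ∃ x' y', x' < y' ∧ y' < N ∧ y1 < y' ∧ ψ ∈ L x' y'} with hrel_def
  have hrel_sub : relevant ⊆ Cl φ := fun ψ h => h.1
  have hrel_fin : relevant.Finite := (Cl_finite φ).subset hrel_sub
  have hrelgood : ∀ ψ ∈ relevant, ∃ p, good ψ p := fun ψ h => hgood ψ h.1 h.2
  set W0 : Set (ℕ × ℕ) := pt '' relevant with hW0_def
  have hW0fin : W0.Finite := hrel_fin.image pt
  have hW0prop : WitProp φ N L y1 W0 := by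
    constructor
    · rintro p ⟨ψ, hψ, rfl⟩
      have h := hpt ψ (hrelgood ψ hψ)
      exact ⟨h.1, h.2.1, h.2.2.1⟩
    · intro ψ hψ happ
      have hrel : ψ ∈ relevant := ⟨hψ, happ⟩
      have h := hpt ψ (hrelgood ψ hrel)
      exact ⟨pt ψ, ⟨ψ, hrel, rfl⟩, h.2.2.2.1, h.2.2.2.2⟩
  -- minimal witness set
  obtain ⟨W, hWsub, hWprop, hWmin⟩ :=
    exists_min_subset (WitProp φ N L y1) W0.ncard W0 hW0fin le_rfl hW0prop
  have hWfin : W.Finite := hW0fin.subset hWsub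
  -- size bound on W
  set need : Formula P → Prop := fun ψ =>
    ∃ p, p ∈ W ∧ (ψ ∈ L p.1 p.2 ∧
      ∀ x' y', x' < y' → y' < N → y1 < y' → y' < p.2 → negc ψ ∈ L x' y') with hneed_def
  set q : Formula P → ℕ × ℕ := fun ψ => if h : need ψ then h.choose else (0, 1) with hq_def
  have hq : ∀ ψ ∈ relevant, q ψ ∈ W ∧ ψ ∈ L (q ψ).1 (q ψ).2 ∧
      ∀ x' y', x' < y' → y' < N → y1 < y' → y' < (q ψ).2 → negc ψ ∈ L x' y' := by
    intro ψ hψ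
    have hn : need ψ := hWprop.2 ψ hψ.1 hψ.2
    simp only [hq_def, dif_pos hn]
    exact ⟨hn.choose_spec.1, hn.choose_spec.2.1, hn.choose_spec.2.2⟩
  have hWW : q '' relevant = W := by
    apply hWmin
    · rintro _ ⟨ψ, hψ, rfl⟩
      exact (hq ψ hψ).1
    · constructor
      · rintro p ⟨ψ, hψ, rfl⟩
        exact hWprop.1 _ ((hq ψ hψ).1)
      · intro ψ hψ happ
        have hrel : ψ ∈ relevant := ⟨hψ, happ⟩
        exact ⟨q ψ, ⟨ψ, hrel, rfl⟩, (hq ψ hrel).2.1, (hq ψ hrel).2.2⟩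
  have hWcard : W.ncard ≤ 2 * numSub φ := by
    calc W.ncard = (q '' relevant).ncard := by rw [hWW]
      _ ≤ relevant.ncard := Set.ncard_image_le hrel_fin
      _ ≤ (Cl φ).ncard := Set.ncard_le_ncard hrel_sub (Cl_finite φ)
      _ ≤ 2 * numSub φ := Cl_ncard_le φ
  -- the projection S and its cardinality
  set S : Set ℕ := proj y1 W with hS_def
  have hSsub : S ⊆ Prod.fst '' W := by
    rintro x ⟨⟨y, hy⟩, _⟩
    exact ⟨(x, y), hy, rfl⟩
  have hSfin : S.Finite := (hWfin.image Prod.fst).subset hSsub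
  have hScard : S.ncard ≤ 2 * numSub φ :=
    le_trans (le_trans (Set.ncard_le_ncard hSsub (hWfin.image Prod.fst))
      (Set.ncard_image_le hWfin)) hWcard
  have hSlt : ∀ x ∈ S, x < y1 := fun x hx => hx.2
  -- per-atom injections
  have key : ∀ F : Set (Formula P), ∃ f : ℕ → ℕ,
      {x | x ∈ S ∧ L x y1 = F} ⊆ f ⁻¹' {x | x < y0 ∧ L x y0 = F} ∧
      Set.InjOn f {x | x ∈ S ∧ L x y1 = F} := by
    intro F
    have hSFfin : {x | x ∈ S ∧ L x y1 = F}.Finite := hSfin.subset fun x hx => hx.1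
    have hc1 : {x | x ∈ S ∧ L x y1 = F}.ncard ≤ cnt L y1 F :=
      Set.ncard_le_ncard (fun x hx => ⟨hSlt x hx.1, hx.2⟩) (hfin y1 F)
    have hc2 : {x | x ∈ S ∧ L x y1 = F}.ncard ≤ 2 * numSub φ :=
      le_trans (Set.ncard_le_ncard (fun x hx => hx.1) hSfin) hScard
    have hc' : {x | x ∈ S ∧ L x y1 = F}.ncard ≤ cnt L y0 F := by
      have hce := hchar F
      simp only [charFn] at hce
      omega
    exact Set.Finite.exists_injOn_of_encard_le hSFfin
      (by rw [← hSFfin.cast_ncard_eq, ← (hfin y0 F).cast_ncard_eq]; exact_mod_cast hc')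
  choose g hg1 hg2 using key
  refine ⟨hshadeq, hcorner, W, ⟨hWprop, hWmin⟩, fun x => g (L x y1) x, ?_, ?_⟩
  · -- injectivity
    intro a ha b hb hab
    have hA := hg1 (L a y1) (show a ∈ {x | x ∈ S ∧ L x y1 = L a y1} from ⟨ha, rfl⟩)
    have hB := hg1 (L b y1) (show b ∈ {x | x ∈ S ∧ L x y1 = L b y1} from ⟨hb, rfl⟩)
    have hab' : g (L a y1) a = g (L b y1) b := hab
    have hFF : L a y1 = L b y1 := by
      rw [← hA.2, ← hB.2, hab']
    rw [← hFF] at hab'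
    exact hg2 (L a y1) ⟨ha, rfl⟩ ⟨hb, hFF.symm⟩ hab'
  · -- maps into row y0 with the same labels
    intro x hx
    have h := hg1 (L x y1) (show x ∈ {x' | x' ∈ S ∧ L x' y1 = L x y1} from ⟨hx, rfl⟩)
    exact ⟨h.1, h.2.symm⟩

end ABBL
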